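/- arXiv:0709.2882 — 2 statements merged into one kernel-verified Lean document; each statement's English description precedes it below -/
import Mathlib

section
/- There exist constants A > a > 1 such that for Lebesgue-almost every α ∈ (0,1), a < q_k(α)^{1/k} < A for all sufficiently large k, where q_k(α) are the convergent denominators of α. -/
open Filter MeasureTheory Real

/-- Distance from `x` to the nearest integer. -/
noncomputable def nd (x : ℝ) : ℝ := |x - round x|

/-- The Gauss map `x ↦ frac (1/x)` (with `0 ↦ 0`). -/
noncomputable def gaussMap (x : ℝ) : ℝ := Int.fract x⁻¹

/-- The `k`-th partial quotient of the continued fraction of `α` (for `k ≥ 1`). -/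
noncomputable def cfA (α : ℝ) (k : ℕ) : ℕ := ⌊(gaussMap^[k-1] α)⁻¹⌋₊

/-- Denominators of the continued fraction convergents of `α`. -/
noncomputable def cfQ (α : ℝ) : ℕ → ℕ
  | 0 => 1
  | 1 => cfA α 1
  | (k+2) => cfA α (k+2) * cfQ α (k+1) + cfQ α k

/-- Numerators of the continued fraction convergents of `α`. -/
noncomputable def cfP (α : ℝ) : ℕ → ℕ
  | 0 => 0
  | 1 => 1
  | (k+2) => cfA α (k+2) * cfP α (k+1) + cfP α k

/-- `S α M = ∑_{m=1}^M 1/‖mα‖`. -/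
noncomputable def S (α : ℝ) (M : ℕ) : ℝ := ∑ m ∈ Finset.Icc 1 M, 1 / nd (m * α)


/-!
Writing `T` for the Gauss map, the recursion for `q_k` gives `2^k ≤ 2 q_k²` (since
`q_{k+2} ≥ 2 q_k`) and `q_k ≤ ∏_{i<k} 2 a_{i+1} ≤ ∏_{i<k} 2 / T^i α = 2^k W_k(α)²` with
`W_k(α) = ∏_{i<k} (T^i α)^{-1/2}`. The lower bound is deterministic. For the upper bound,
the change of variables along the inverse branches `y ↦ 1/(y+n)` of `T` shows
`∫₀¹ x^{-s} F(T x) dx ≤ (∑ n^{s-2}) ∫₀¹ F`, so `∫₀¹ W_k ≤ C^k` with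
`C = ∑ n^{-3/2} < ∞`. By Markov's inequality `W_k(α) ≥ (C+1)^k` has measure at most
`(C/(C+1))^k`, and Borel–Cantelli gives `W_k(α) < (C+1)^k`, hence `q_k < (2(C+1)²)^k`,
for almost every `α` and all large `k`.
-/

open Set
open scoped ENNReal

theorem measurable_gaussMap : Measurable gaussMap :=
  measurable_fract.comp measurable_inv

theorem irrational_gaussMap {x : ℝ} (hx : Irrational x) : Irrational (gaussMap x) :=
  hx.inv.sub_intCast _

theorem irrational_gaussMap_iterate {x : ℝ} (hx : Irrational x) (i : ℕ) :
    Irrational (gaussMap^[i] x) :=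
  Function.Iterate.rec Irrational hx (fun _ => irrational_gaussMap) i

theorem gaussMap_mem_Ioo {x : ℝ} (hx : Irrational x) : gaussMap x ∈ Ioo 0 1 :=
  ⟨(Int.fract_nonneg _).lt_of_ne' (irrational_gaussMap hx).ne_zero, Int.fract_lt_one _⟩

theorem gaussMap_iterate_mem_Ioo {x : ℝ} (hx : Irrational x) (h0 : x ∈ Ioo 0 1) :
    ∀ i, gaussMap^[i] x ∈ Ioo 0 1
  | 0 => h0
  | i + 1 => by
    rw [Function.iterate_succ_apply']
    exact gaussMap_mem_Ioo (irrational_gaussMap_iterate hx i)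

section PartialQuotients

variable {α : ℝ}

theorem one_le_cfA_succ {i : ℕ} (h : gaussMap^[i] α ∈ Ioc 0 1) : 1 ≤ cfA α (i + 1) :=
  Nat.le_floor <| by simpa using one_le_inv₀ h.1 |>.mpr h.2

theorem cfA_succ_le {i : ℕ} (h : 0 ≤ gaussMap^[i] α) :
    (cfA α (i + 1) : ℝ) ≤ (gaussMap^[i] α)⁻¹ :=
  Nat.floor_le (inv_nonneg.mpr h)

variable (ha : ∀ i, 1 ≤ cfA α (i + 1))
include ha

theorem cfQ_le_cfQ_succ : ∀ k, cfQ α k ≤ cfQ α (k + 1)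
  | 0 => by simpa [cfQ] using ha 0
  | k + 1 => by
    show cfQ α (k + 1) ≤ cfA α (k + 2) * cfQ α (k + 1) + cfQ α k
    nlinarith [ha (k + 1)]

theorem two_mul_cfQ_le_cfQ_add_two (k : ℕ) : 2 * cfQ α k ≤ cfQ α (k + 2) := by
  show 2 * cfQ α k ≤ cfA α (k + 2) * cfQ α (k + 1) + cfQ α k
  nlinarith [ha (k + 1), cfQ_le_cfQ_succ ha k]

theorem cfQ_succ_le_two_mul_cfA_mul_cfQ : ∀ k, cfQ α (k + 1) ≤ 2 * cfA α (k + 1) * cfQ α k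
  | 0 => show cfA α 1 ≤ 2 * cfA α 1 * 1 by omega
  | k + 1 => by
    show cfA α (k + 2) * cfQ α (k + 1) + cfQ α k ≤ 2 * cfA α (k + 2) * cfQ α (k + 1)
    nlinarith [ha (k + 1), cfQ_le_cfQ_succ ha k]

theorem two_pow_le_two_mul_cfQ_sq : ∀ k, 2 ^ k ≤ 2 * cfQ α k ^ 2
  | 0 => by simp [cfQ]
  | 1 => by simpa [cfQ] using Nat.one_le_pow 2 _ (ha 0)
  | k + 2 => calc
      2 ^ (k + 2) ≤ 4 * (2 * cfQ α k ^ 2) := by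
        rw [pow_add]; linarith [two_pow_le_two_mul_cfQ_sq k]
      _ = 2 * (2 * cfQ α k) ^ 2 := by ring
      _ ≤ 2 * cfQ α (k + 2) ^ 2 := by gcongr; exact two_mul_cfQ_le_cfQ_add_two ha k

theorem cfQ_le_prod (k : ℕ) : cfQ α k ≤ ∏ i ∈ Finset.range k, 2 * cfA α (i + 1) := by
  induction k with
  | zero => simp [cfQ]
  | succ k ih =>
    rw [Finset.prod_range_succ, mul_comm _ (2 * _)]
    exact (cfQ_succ_le_two_mul_cfA_mul_cfQ ha k).trans (Nat.mul_le_mul_left _ ih)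

end PartialQuotients

theorem gaussMap_inv_add_natCast {y : ℝ} (hy : y ∈ Ico 0 1) (n : ℕ) :
    gaussMap (y + n)⁻¹ = y := by
  rw [gaussMap, inv_inv, Int.fract_add_natCast, Int.fract_eq_self.mpr hy]

theorem image_inv_add_const_Ioo_zero_one {c : ℝ} (hc : 0 < c) :
    (fun y => (y + c)⁻¹) '' Ioo 0 1 = Ioo (c + 1)⁻¹ c⁻¹ := by
  ext x
  simp only [mem_image, mem_Ioo]
  constructor
  · rintro ⟨y, ⟨hy0, hy1⟩, rfl⟩
    exact ⟨inv_strictAnti₀ (by linarith) (by linarith), inv_strictAnti₀ hc (by linarith)⟩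
  · rintro ⟨h1, h2⟩
    have hx : 0 < x := (inv_pos.mpr (by linarith)).trans h1
    refine ⟨x⁻¹ - c, ⟨?_, ?_⟩, by simp⟩
    · linarith [(lt_inv_comm₀ hx hc).mp h2]
    · linarith [(inv_lt_comm₀ (by linarith) hx).mp h1]

theorem lintegral_Ioo_inv_add_const_inv {c : ℝ} (hc : 0 < c) (g : ℝ → ℝ≥0∞) :
    ∫⁻ x in Ioo (c + 1)⁻¹ c⁻¹, g x =
      ∫⁻ y in Ioo 0 1, ENNReal.ofReal ((y + c) ^ 2)⁻¹ * g (y + c)⁻¹ := by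
  rw [← image_inv_add_const_Ioo_zero_one hc,
    lintegral_image_eq_lintegral_abs_deriv_mul measurableSet_Ioo
      (f := fun y => (y + c)⁻¹) (f' := fun y => -1 / (y + c) ^ 2)
      (fun y hy => (((hasDerivAt_id' y).add_const c).inv (by linarith [hy.1])).hasDerivWithinAt)
      (inv_injective.comp (add_left_injective c)).injOn]
  refine setLIntegral_congr_fun measurableSet_Ioo fun y _ => ?_
  rw [abs_div, abs_neg, abs_one, abs_of_nonneg (sq_nonneg _), one_div]

/-- The `n = 0` term, `0 ^ (s - 2)`, vanishes for `s ≠ 2`; it belongs to the empty branch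
`Ioc 1 0⁻¹`. -/
noncomputable def gaussTransferConst (s : ℝ) : ℝ≥0∞ :=
  ∑' n : ℕ, ENNReal.ofReal ((n : ℝ) ^ (s - 2))

theorem gaussTransferConst_ne_top {s : ℝ} (hs : s < 1) : gaussTransferConst s ≠ ∞ := by
  rw [gaussTransferConst, ← ENNReal.ofReal_tsum_of_nonneg (fun n => by positivity)
    (Real.summable_nat_rpow.mpr (by linarith))]
  exact ENNReal.ofReal_ne_top

theorem Ioo_zero_one_subset_iUnion_Ioc_inv :
    Ioo (0 : ℝ) 1 ⊆ ⋃ n : ℕ, Ioc ((n : ℝ) + 1)⁻¹ (n : ℝ)⁻¹ := by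
  rintro x ⟨hx0, hx1⟩
  have hfloor : 0 < ⌊x⁻¹⌋₊ := Nat.floor_pos.mpr ((one_le_inv₀ hx0).mpr hx1.le)
  refine mem_iUnion.mpr ⟨⌊x⁻¹⌋₊, ?_, ?_⟩
  · exact (inv_lt_comm₀ (by positivity) hx0).mpr (Nat.lt_floor_add_one _)
  · exact (le_inv_comm₀ hx0 (Nat.cast_pos.mpr hfloor)).mpr (Nat.floor_le (by positivity))

section Transfer

variable {s : ℝ} (hs : s ≤ 2) {F : ℝ → ℝ≥0∞} (hF : Measurable F)
include hs hF

theorem lintegral_Ioc_inv_rpow_mul_gaussMap_le (n : ℕ) :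
    ∫⁻ x in Ioc ((n : ℝ) + 1)⁻¹ (n : ℝ)⁻¹,
        ENNReal.ofReal (x ^ (-s)) * F (gaussMap x) ≤
      ENNReal.ofReal ((n : ℝ) ^ (s - 2)) * ∫⁻ y in Ioo 0 1, F y := by
  rcases n.eq_zero_or_pos with rfl | hn
  · simp
  have hn' : (0 : ℝ) < n := Nat.cast_pos.mpr hn
  rw [setLIntegral_congr Ioo_ae_eq_Ioc.symm, lintegral_Ioo_inv_add_const_inv hn',
    ← lintegral_const_mul _ hF]
  refine setLIntegral_mono (hF.const_mul _) fun y hy => ?_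
  have hyn : 0 < y + n := by linarith [hy.1]
  rw [gaussMap_inv_add_natCast (Ioo_subset_Ico_self hy), ← mul_assoc,
    ← ENNReal.ofReal_mul (by positivity)]
  gcongr
  calc ((y + n) ^ 2)⁻¹ * (y + n)⁻¹ ^ (-s) = (y + n) ^ (s - 2) := by
        rw [Real.inv_rpow hyn.le, Real.rpow_neg hyn.le, inv_inv, ← Real.rpow_natCast,
          ← Real.rpow_neg hyn.le, ← Real.rpow_add hyn]
        ring_nf
    _ ≤ n ^ (s - 2) := Real.rpow_le_rpow_of_nonpos hn' (by linarith [hy.1]) (by linarith)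

theorem lintegral_rpow_mul_gaussMap_le :
    ∫⁻ x in Ioo 0 1, ENNReal.ofReal (x ^ (-s)) * F (gaussMap x) ≤
      gaussTransferConst s * ∫⁻ y in Ioo 0 1, F y :=
  calc
    _ ≤ ∫⁻ x in ⋃ n : ℕ, Ioc ((n : ℝ) + 1)⁻¹ (n : ℝ)⁻¹,
          ENNReal.ofReal (x ^ (-s)) * F (gaussMap x) :=
      lintegral_mono_set Ioo_zero_one_subset_iUnion_Ioc_inv
    _ ≤ ∑' n : ℕ, ∫⁻ x in Ioc ((n : ℝ) + 1)⁻¹ (n : ℝ)⁻¹,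
          ENNReal.ofReal (x ^ (-s)) * F (gaussMap x) :=
      lintegral_iUnion_le _ _
    _ ≤ ∑' n : ℕ, ENNReal.ofReal ((n : ℝ) ^ (s - 2)) * ∫⁻ y in Ioo 0 1, F y :=
      ENNReal.tsum_le_tsum (lintegral_Ioc_inv_rpow_mul_gaussMap_le hs hF)
    _ = _ := ENNReal.tsum_mul_right

end Transfer

noncomputable def orbitWeight (s : ℝ) (k : ℕ) (x : ℝ) : ℝ≥0∞ :=
  ∏ i ∈ Finset.range k, ENNReal.ofReal ((gaussMap^[i] x) ^ (-s))

theorem measurable_orbitWeight (s : ℝ) (k : ℕ) : Measurable (orbitWeight s k) :=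
  Finset.measurable_prod _ fun i _ =>
    ENNReal.measurable_ofReal.comp ((measurable_gaussMap.iterate i).pow_const _)

theorem orbitWeight_succ (s : ℝ) (k : ℕ) (x : ℝ) :
    orbitWeight s (k + 1) x = ENNReal.ofReal (x ^ (-s)) * orbitWeight s k (gaussMap x) := by
  simp only [orbitWeight, Finset.prod_range_succ', Function.iterate_succ_apply,
    Function.iterate_zero_apply, mul_comm]

theorem lintegral_orbitWeight_le {s : ℝ} (hs : s ≤ 2) (k : ℕ) :
    ∫⁻ x in Ioo 0 1, orbitWeight s k x ≤ gaussTransferConst s ^ k := by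
  induction k with
  | zero => simp [orbitWeight]
  | succ k ih =>
    simp only [orbitWeight_succ, pow_succ']
    exact (lintegral_rpow_mul_gaussMap_le hs (measurable_orbitWeight s k)).trans (by gcongr)

theorem MeasureTheory.ae_eventually_lt_pow_of_lintegral_le_pow {X : Type*}
    [MeasurableSpace X] {μ : Measure X} {f : ℕ → X → ℝ≥0∞} (hf : ∀ k, AEMeasurable (f k) μ)
    {c r : ℝ≥0∞} (hc : ∀ k, ∫⁻ x, f k x ∂μ ≤ c ^ k) (hcr : c < r) (hr : r ≠ ∞) :
    ∀ᵐ x ∂μ, ∀ᶠ k in atTop, f k x < r ^ k := by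
  have hr0 : r ≠ 0 := (pos_of_gt hcr).ne'
  have hmarkov (k : ℕ) : μ {x | r ^ k ≤ f k x} ≤ (c / r) ^ k := calc
    _ ≤ (∫⁻ x, f k x ∂μ) / r ^ k :=
      meas_ge_le_lintegral_div (hf k) (pow_ne_zero _ hr0) (ENNReal.pow_ne_top hr)
    _ ≤ c ^ k / r ^ k := by gcongr; exact hc k
    _ = (c / r) ^ k := by rw [div_eq_mul_inv, div_eq_mul_inv, mul_pow, ENNReal.inv_pow]
  have hsum : ∑' k, μ {x | r ^ k ≤ f k x} ≠ ∞ :=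
    ne_top_of_le_ne_top
      (tsum_geometric_lt_top.mpr (ENNReal.div_lt_of_lt_mul (by rwa [one_mul]))).ne
      (ENNReal.tsum_le_tsum hmarkov)
  filter_upwards [ae_eventually_notMem hsum] with x hx
  filter_upwards [hx] with k hk
  exact not_le.mp hk

section Growth

variable {α : ℝ} (hα : ∀ i, gaussMap^[i] α ∈ Ioo 0 1)
include hα

theorem one_le_cfA_succ_of_mem_Ioo (i : ℕ) : 1 ≤ cfA α (i + 1) :=
  one_le_cfA_succ (Ioo_subset_Ioc_self (hα i))

theorem nine_eighths_pow_lt_cfQ {k : ℕ} (hk : 2 ≤ k) : (9 / 8 : ℝ) ^ k < cfQ α k := by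
  have hq : (2 : ℝ) ^ k ≤ 2 * (cfQ α k : ℝ) ^ 2 := by
    exact_mod_cast two_pow_le_two_mul_cfQ_sq (one_le_cfA_succ_of_mem_Ioo hα) k
  have h : 2 * ((9 / 8 : ℝ) ^ k) ^ 2 < 2 ^ k := calc
    2 * ((9 / 8 : ℝ) ^ k) ^ 2 = 2 * (81 / 64) ^ k := by
      rw [← pow_mul, mul_comm k 2, pow_mul]; norm_num
    _ < (128 / 81) ^ k * (81 / 64) ^ k := by
      gcongr
      calc (2 : ℝ) < (128 / 81) ^ 2 := by norm_num
        _ ≤ (128 / 81) ^ k := pow_le_pow_right₀ (by norm_num) hk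
    _ = 2 ^ k := by rw [← mul_pow]; norm_num
  exact lt_of_pow_lt_pow_left₀ 2 (Nat.cast_nonneg _) (by linarith)

theorem cfQ_le_two_pow_mul_prod_sq (k : ℕ) :
    (cfQ α k : ℝ) ≤
      2 ^ k * (∏ i ∈ Finset.range k, (gaussMap^[i] α) ^ (-(1 / 2) : ℝ)) ^ 2 :=
  calc (cfQ α k : ℝ)
      ≤ ∏ i ∈ Finset.range k, 2 * (cfA α (i + 1) : ℝ) := by
        exact_mod_cast cfQ_le_prod (one_le_cfA_succ_of_mem_Ioo hα) k
    _ ≤ ∏ i ∈ Finset.range k, 2 * (gaussMap^[i] α)⁻¹ :=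
        Finset.prod_le_prod (fun _ _ => by positivity)
          fun i _ => by gcongr; exact cfA_succ_le (hα i).1.le
    _ = 2 ^ k * (∏ i ∈ Finset.range k, (gaussMap^[i] α) ^ (-(1 / 2) : ℝ)) ^ 2 := by
        rw [Finset.prod_mul_distrib, Finset.prod_const, Finset.card_range, ← Finset.prod_pow]
        congr 1
        refine Finset.prod_congr rfl fun i _ => ?_
        rw [← Real.rpow_natCast, ← Real.rpow_mul (hα i).1.le]
        norm_num [Real.rpow_neg_one]

theorem cfQ_lt_of_orbitWeight_lt {r : ℝ} (hr : 0 ≤ r) {k : ℕ}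
    (h : orbitWeight (1 / 2) k α < ENNReal.ofReal r ^ k) : (cfQ α k : ℝ) < (2 * r ^ 2) ^ k := by
  set R := ∏ i ∈ Finset.range k, (gaussMap^[i] α) ^ (-(1 / 2) : ℝ)
  have hR : 0 ≤ R := Finset.prod_nonneg fun i _ => by have := (hα i).1; positivity
  rw [orbitWeight, ← ENNReal.ofReal_prod_of_nonneg (fun i _ => by have := (hα i).1; positivity),
    ← ENNReal.ofReal_pow hr, ENNReal.ofReal_lt_ofReal_iff_of_nonneg hR] at h
  calc (cfQ α k : ℝ) ≤ 2 ^ k * R ^ 2 := cfQ_le_two_pow_mul_prod_sq hα k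
    _ < 2 ^ k * (r ^ k) ^ 2 := by gcongr
    _ = (2 * r ^ 2) ^ k := by ring

end Growth

theorem cfQ_exponential_growth :
    ∃ a A : ℝ, 1 < a ∧ a < A ∧
      ∀ᵐ α ∂(MeasureTheory.volume.restrict (Set.Ioo (0:ℝ) 1)),
        ∀ᶠ k : ℕ in Filter.atTop,
          a < (cfQ α k : ℝ) ^ ((1:ℝ) / k) ∧ (cfQ α k : ℝ) ^ ((1:ℝ) / k) < A := by
  set c := gaussTransferConst (1 / 2)
  have hc : c ≠ ∞ := gaussTransferConst_ne_top (by norm_num)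
  set r := c.toReal + 1
  have hr : 1 ≤ r := by simp [r]
  have hcr : c < ENNReal.ofReal r := by
    rw [← ENNReal.ofReal_toReal hc, ENNReal.ofReal_lt_ofReal_iff (by positivity)]
    linarith
  have hweight := ae_eventually_lt_pow_of_lintegral_le_pow
    (fun k => (measurable_orbitWeight (1 / 2) k).aemeasurable)
    (lintegral_orbitWeight_le (by norm_num)) hcr ENNReal.ofReal_ne_top
  have hirr : ∀ᵐ α ∂(volume.restrict (Ioo (0 : ℝ) 1)), Irrational α :=
    (countable_range ((↑) : ℚ → ℝ)).ae_notMem _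
  refine ⟨9 / 8, 2 * r ^ 2, by norm_num, by nlinarith, ?_⟩
  filter_upwards [hweight, hirr, ae_restrict_mem measurableSet_Ioo] with α hαw hαirr hα01
  have hα := gaussMap_iterate_mem_Ioo hαirr hα01
  filter_upwards [hαw, eventually_ge_atTop 2] with k hk hk2
  have hk0 : (0 : ℝ) < k := by exact_mod_cast (by omega : 0 < k)
  rw [one_div, Real.lt_rpow_inv_iff_of_pos (by norm_num) (Nat.cast_nonneg _) hk0,
    Real.rpow_inv_lt_iff_of_pos (Nat.cast_nonneg _) (by positivity) hk0,
    Real.rpow_natCast, Real.rpow_natCast]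
  exact ⟨nine_eighths_pow_lt_cfQ hα hk2, cfQ_lt_of_orbitWeight_lt hα (by positivity) hk⟩
end

section
/- For Lebesgue-almost every α ∈ (0,1), a_{k+1}(α) ≤ q_k(α) holds for all sufficiently large k, and consequently there exist constants c > 0 (depending on α) with Σ_{m=1}^M 1/‖mα‖ ≥ c · M log M for all large M. -/
open Filter MeasureTheory Real

/-!
If `a_{k+1} > q_k` then `q_{k+1} ≥ q_k²`, so `|α - p_k/q_k| ≤ 1/(q_k q_{k+1}) ≤ q_k⁻³`: `α` lies
within `n⁻³` of a fraction with denominator `n = q_k`. These sets have measure `O(n⁻²)`, so by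
Borel–Cantelli almost every `α` lies in only finitely many of them, and `q_k → ∞`.

Given `a_{k+1} ≤ q_k` eventually, choose `k` with `q = q_k ≤ M < q_{k+1} ≤ 2q²`. Then
`M |qα - p_k| ≤ 1`, hence `‖mα‖ ≤ (m p_k mod q + 1)/q` for `m ≤ M`. Since `p_k` is a unit mod `q`,
on each block of `q` consecutive `m` the residues `m p_k mod q` run through `0, …, q-1`, so every
block contributes at least `q (log q - 1)`; the `⌊M/q⌋ ≥ M/(2q)` blocks give `≫ M log q ≫ M log M`.
-/

open Finset

def fractionNbhd (n : ℕ) : Set ℝ :=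
  ⋃ p ∈ range (n + 1), Metric.closedBall ((p : ℝ) / n) (1 / (n : ℝ) ^ 3)

lemma volume_fractionNbhd_le (n : ℕ) :
    volume (fractionNbhd n) ≤ ENNReal.ofReal (4 / (n : ℝ) ^ 2) := by
  refine (measure_biUnion_finset_le _ _).trans ?_
  simp only [Real.volume_closedBall, sum_const, card_range, nsmul_eq_mul]
  rw [← ENNReal.ofReal_natCast, ← ENNReal.ofReal_mul (by positivity)]
  apply ENNReal.ofReal_le_ofReal
  rcases Nat.eq_zero_or_pos n with rfl | hn
  · simp
  · have hn : (1 : ℝ) ≤ n := by exact_mod_cast hn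
    rw [show ((n + 1 : ℕ) : ℝ) * (2 * (1 / (n : ℝ) ^ 3)) = (2 * n + 2) / n ^ 3 by push_cast; ring,
      div_le_div_iff₀ (by positivity) (by positivity)]
    nlinarith

lemma ae_eventually_notMem_fractionNbhd : ∀ᵐ x : ℝ, ∀ᶠ n in atTop, x ∉ fractionNbhd n := by
  refine ae_eventually_notMem
    (ne_top_of_le_ne_top (b := ENNReal.ofReal (∑' n : ℕ, 4 / (n : ℝ) ^ 2)) ENNReal.ofReal_ne_top ?_)
  have hsum : Summable fun n : ℕ => 4 / (n : ℝ) ^ 2 := by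
    simpa [div_eq_mul_inv] using (Real.summable_one_div_nat_pow.mpr one_lt_two).mul_left 4
  rw [ENNReal.ofReal_tsum_of_nonneg (fun n => by positivity) hsum]
  exact ENNReal.tsum_le_tsum volume_fractionNbhd_le

lemma ae_irrational : ∀ᵐ x : ℝ, Irrational x :=
  (Set.countable_range ((↑) : ℚ → ℝ)).ae_notMem volume

lemma nd_le_abs_sub_intCast (x : ℝ) (n : ℤ) : nd x ≤ |x - n| := round_le x n

lemma Irrational.nd_pos {x : ℝ} (hx : Irrational x) : 0 < nd x :=
  abs_pos.2 (sub_ne_zero.2 (hx.ne_int _))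

lemma nd_natCast_mul_le {α : ℝ} {p q m : ℕ} (hq : 0 < q) (hm : m * |q * α - p| ≤ 1) :
    nd (m * α) ≤ ((m * p % q : ℕ) + 1) / q := by
  have hq' : (0 : ℝ) < q := by exact_mod_cast hq
  have hdiv : (q : ℝ) * (m * p / q : ℕ) + (m * p % q : ℕ) = m * p := by
    exact_mod_cast Nat.div_add_mod (m * p) q
  have hsplit : m * α - (m * p / q : ℕ) = ((m * p % q : ℕ) + m * (q * α - p)) / q := by
    field_simp
    linear_combination -hdiv
  calc nd (m * α) ≤ |((m * p % q : ℕ) + m * (q * α - p)) / q| := by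
        simpa only [Int.cast_natCast, hsplit] using nd_le_abs_sub_intCast (m * α) (m * p / q : ℕ)
    _ ≤ ((m * p % q : ℕ) + 1) / q := by
        rw [abs_div, abs_of_pos hq']
        gcongr
        refine (abs_add_le _ _).trans ?_
        rw [Nat.abs_cast, abs_mul, Nat.abs_cast]
        linarith

lemma sum_range_mul_mod {M : Type*} [AddCommMonoid M] (f : ℕ → M) (q T : ℕ) :
    ∑ m ∈ range (T * q), f (m % q) = T • ∑ r ∈ range q, f r := by
  induction T with
  | zero => simp
  | succ T ih =>
    rw [add_mul, one_mul, sum_range_add, ih, succ_nsmul]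
    congr 1
    refine sum_congr rfl fun r hr => ?_
    rw [Nat.mul_add_mod_of_lt (mem_range.1 hr)]

lemma Nat.Coprime.sum_range_mul_mod {M : Type*} [AddCommMonoid M] {p q : ℕ} (h : p.Coprime q)
    (f : ℕ → M) : ∑ r ∈ range q, f (r * p % q) = ∑ r ∈ range q, f r := by
  have hinj : Set.InjOn (fun r => r * p % q) (range q) := by
    intro a ha b hb hab
    have := Nat.ModEq.cancel_right_of_coprime h.symm hab
    rwa [Nat.ModEq, Nat.mod_eq_of_lt (mem_range.1 ha), Nat.mod_eq_of_lt (mem_range.1 hb)] at this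
  have himage : (range q).image (fun r => r * p % q) = range q := by
    refine eq_of_subset_of_card_le (fun s hs => ?_) (Finset.card_image_of_injOn hinj).ge
    obtain ⟨r, hr, rfl⟩ := mem_image.1 hs
    exact mem_range.2 (Nat.mod_lt _ (pos_of_ne_zero (by rintro rfl; simp at hr)))
  conv_rhs => rw [← himage]
  rw [sum_image hinj]

lemma le_S_of_abs_mul_sub_le {α : ℝ} {p q T M : ℕ} (hα : Irrational α) (hq : 0 < q)
    (hpq : p.Coprime q) (hTM : T * q ≤ M) (hM : M * |q * α - p| ≤ 1) :
    (T * q : ℝ) * (log (q + 1) - 1) ≤ S α M := by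
  -- the residue `0` (multiples of `q`, among them `m = 0`) is discarded
  set h : ℕ → ℝ := fun s => if s = 0 then 0 else 1 / ((s : ℝ) + 1)
  have hterm (m : ℕ) (hm : m ∈ Icc 1 M) : q * h (m * p % q) ≤ 1 / nd (m * α) := by
    have hmα : Irrational (m * α) := hα.natCast_mul (by simp at hm; omega)
    by_cases hr : m * p % q = 0
    · simpa [h, hr] using hmα.nd_pos.le
    · have hmM : (m : ℝ) * |q * α - p| ≤ 1 :=
        (mul_le_mul_of_nonneg_right (by simp at hm; exact_mod_cast hm.2) (abs_nonneg _)).trans hM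
      calc q * h (m * p % q) = 1 / (((m * p % q : ℕ) + 1) / q) := by simp [h, hr]; ring
        _ ≤ 1 / nd (m * α) := one_div_le_one_div_of_le hmα.nd_pos (nd_natCast_mul_le hq hmM)
  have hsum : ∑ s ∈ range q, h s = harmonic q - 1 := by
    obtain ⟨n, rfl⟩ := Nat.exists_eq_add_of_lt hq
    simp [h, harmonic, sum_range_succ']
  calc (T * q : ℝ) * (log (q + 1) - 1) ≤ T * q * (harmonic q - 1) := by
        gcongr
        exact_mod_cast log_add_one_le_harmonic q
    _ = ∑ m ∈ range (T * q), q * h (m * p % q) := by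
        have hperiodic := sum_range_mul_mod (fun r => q * h (r * p % q)) q T
        simp only [Nat.mod_mul_mod] at hperiodic
        rw [hperiodic, hpq.sum_range_mul_mod (fun r => q * h r),
          ← mul_sum, hsum, nsmul_eq_mul, mul_assoc]
    _ ≤ ∑ m ∈ range (M + 1), q * h (m * p % q) :=
        sum_le_sum_of_subset_of_nonneg (range_subset_range.2 (by omega))
          fun s _ _ => mul_nonneg q.cast_nonneg (by positivity)
    _ = ∑ m ∈ Icc 1 M, q * h (m * p % q) := by
        rw [show range (M + 1) = insert 0 (Icc 1 M) by ext; simp; omega, sum_insert (by simp)]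
        simp [h]
    _ ≤ S α M := sum_le_sum hterm

lemma exists_le_lt_succ {β : Type*} [LinearOrder β] {f : ℕ → β} {b : β} (h0 : f 0 ≤ b)
    (hb : ∃ n, b < f n) : ∃ k, f k ≤ b ∧ b < f (k + 1) := by
  classical
  have hn : Nat.find hb ≠ 0 := fun h => (Nat.find_spec hb).not_ge (h ▸ h0)
  refine ⟨Nat.find hb - 1, not_lt.1 (Nat.find_min hb (by omega)), ?_⟩
  rw [Nat.sub_add_cancel (Nat.one_le_iff_ne_zero.2 hn)]
  exact Nat.find_spec hb

lemma log_le_four_mul_log_sub_one {M q : ℝ} (hM : 512 ≤ M) (hMq : M ≤ 2 * q ^ 2) :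
    log M ≤ 4 * (log q - 1) := by
  have hq : q ^ 2 ≠ 0 := by nlinarith
  have hupper : log M ≤ log 2 + 2 * log q := by
    calc log M ≤ log (2 * q ^ 2) := log_le_log (by linarith) hMq
      _ = log 2 + 2 * log q := by rw [log_mul two_ne_zero hq, log_pow]; push_cast; ring
  have hlower : 8 * log 2 ≤ 2 * log q := by
    calc 8 * log 2 = log (2 ^ 8) := by rw [log_pow]; push_cast; ring
      _ ≤ log (q ^ 2) := log_le_log (by norm_num) (by linarith)
      _ = 2 * log q := by rw [log_pow]; push_cast; ring
  linarith [log_two_gt_d9]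

lemma gaussMap_lt_one (x : ℝ) : gaussMap x < 1 := Int.fract_lt_one _

lemma Irrational.gaussMap_iterate {x : ℝ} (hx : Irrational x) (k : ℕ) :
    Irrational (_root_.gaussMap^[k] x) := by
  induction k with
  | zero => exact hx
  | succ k ih =>
    rw [Function.iterate_succ_apply', _root_.gaussMap, Int.fract]
    exact ih.inv.sub_intCast _

lemma cfA_mul_cfQ_le (α : ℝ) (k : ℕ) : cfA α (k + 1) * cfQ α k ≤ cfQ α (k + 1) := by
  cases k with
  | zero => simp [cfQ]
  | succ k => rw [cfQ]; exact Nat.le_add_right _ _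

lemma cfP_mul_cfQ_sub_cfP_mul_cfQ (α : ℝ) (k : ℕ) :
    (cfP α (k + 1) : ℤ) * cfQ α k - cfP α k * cfQ α (k + 1) = (-1) ^ k := by
  induction k with
  | zero => simp [cfP, cfQ]
  | succ k ih =>
    simp only [cfP, cfQ, Nat.cast_add, Nat.cast_mul]
    linear_combination (-1 : ℤ) * ih

lemma cfP_coprime_cfQ (α : ℝ) (k : ℕ) : (cfP α k).Coprime (cfQ α k) := by
  have hsq : ((-1 : ℤ) ^ k) ^ 2 = 1 := by rw [← pow_mul, pow_mul']; simp
  refine Nat.isCoprime_iff_coprime.1 ⟨-(-1) ^ k * cfQ α (k + 1), (-1) ^ k * cfP α (k + 1), ?_⟩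
  linear_combination (-1 : ℤ) ^ k * cfP_mul_cfQ_sub_cfP_mul_cfQ α k + hsq

section ContinuedFraction

variable {α : ℝ} (hα : Irrational α) (hα01 : α ∈ Set.Ioo 0 1)
include hα hα01

lemma gaussMap_iterate_mem_Ioo_s15 (k : ℕ) : gaussMap^[k] α ∈ Set.Ioo 0 1 := by
  cases k with
  | zero => exact hα01
  | succ k =>
    have hne := (hα.gaussMap_iterate (k + 1)).ne_zero
    rw [Function.iterate_succ_apply'] at hne ⊢
    exact ⟨(Int.fract_nonneg _).lt_of_ne' hne, gaussMap_lt_one _⟩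

lemma inv_gaussMap_iterate (k : ℕ) :
    (gaussMap^[k] α)⁻¹ = cfA α (k + 1) + gaussMap^[k + 1] α := by
  have hpos := (gaussMap_iterate_mem_Ioo_s15 hα hα01 k).1
  rw [cfA, Nat.add_sub_cancel, Function.iterate_succ_apply', gaussMap,
    natCast_floor_eq_intCast_floor (inv_pos.2 hpos).le, Int.floor_add_fract]

lemma gaussMap_iterate_mul_cfA_add (k : ℕ) :
    gaussMap^[k] α * (cfA α (k + 1) + gaussMap^[k + 1] α) = 1 := by
  rw [← inv_gaussMap_iterate hα hα01, mul_inv_cancel₀ (gaussMap_iterate_mem_Ioo_s15 hα hα01 k).1.ne']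

lemma one_le_cfA (k : ℕ) : 1 ≤ cfA α (k + 1) := by
  obtain ⟨hpos, hlt⟩ := gaussMap_iterate_mem_Ioo_s15 hα hα01 k
  exact Nat.le_floor (by simpa using (one_le_inv₀ hpos).2 hlt.le)

lemma one_le_cfQ (k : ℕ) : 1 ≤ cfQ α k := by
  induction k using Nat.twoStepInduction with
  | zero => simp [cfQ]
  | one => exact one_le_cfA hα hα01 0
  | more k _ ih => rw [cfQ]; nlinarith [one_le_cfA hα hα01 (k + 1)]

lemma cfQ_monotone : Monotone (cfQ α) :=
  monotone_nat_of_le_succ fun k =>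
    (Nat.le_mul_of_pos_left _ (one_le_cfA hα hα01 k)).trans (cfA_mul_cfQ_le α k)

lemma cfQ_succ_le (k : ℕ) : cfQ α (k + 1) ≤ (cfA α (k + 1) + 1) * cfQ α k := by
  cases k with
  | zero => simp [cfQ]
  | succ k => rw [cfQ, add_one_mul]; gcongr; exact cfQ_monotone hα hα01 k.le_succ

lemma le_cfQ (k : ℕ) : k ≤ cfQ α k := by
  induction k using Nat.twoStepInduction with
  | zero => simp
  | one => exact one_le_cfQ hα hα01 1
  | more k ih ih1 =>
    rw [cfQ]
    nlinarith [one_le_cfA hα hα01 (k + 1), one_le_cfQ hα hα01 k]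

lemma tendsto_cfQ_atTop : Tendsto (cfQ α) atTop atTop :=
  tendsto_atTop_mono (le_cfQ hα hα01) tendsto_id

lemma cfP_le_cfQ (k : ℕ) : cfP α k ≤ cfQ α k := by
  induction k using Nat.twoStepInduction with
  | zero => simp [cfP, cfQ]
  | one => exact one_le_cfA hα hα01 0
  | more k ih ih1 => rw [cfP, cfQ]; gcongr

lemma cfQ_mul_sub_cfP_succ (k : ℕ) :
    (cfQ α (k + 1) * α - cfP α (k + 1) : ℝ) = -gaussMap^[k + 1] α * (cfQ α k * α - cfP α k) := by
  induction k with
  | zero =>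
    have h0 := gaussMap_iterate_mul_cfA_add hα hα01 0
    simp only [Function.iterate_zero_apply, zero_add] at h0
    simp only [cfQ, cfP, Nat.cast_one, Nat.cast_zero]
    linear_combination h0
  | succ k ih =>
    simp only [cfQ, cfP, Nat.cast_add, Nat.cast_mul]
    linear_combination (cfA α (k + 2) + gaussMap^[k + 2] α) * ih
      - (cfQ α k * α - cfP α k) * gaussMap_iterate_mul_cfA_add hα hα01 (k + 1)

lemma cfQ_mul_sub_cfP_mul (k : ℕ) :
    (cfQ α k * α - cfP α k) * (cfQ α (k + 1) + cfQ α k * gaussMap^[k + 1] α) = (-1) ^ k := by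
  induction k with
  | zero =>
    have h0 := gaussMap_iterate_mul_cfA_add hα hα01 0
    simp only [Function.iterate_zero_apply, zero_add] at h0
    simp only [cfQ, cfP, Nat.cast_one, Nat.cast_zero]
    linear_combination h0
  | succ k ih =>
    rw [cfQ_mul_sub_cfP_succ hα hα01]
    simp only [cfQ, Nat.cast_add, Nat.cast_mul]
    linear_combination -ih
      - (cfQ α k * α - cfP α k) * cfQ α (k + 1) * gaussMap_iterate_mul_cfA_add hα hα01 (k + 1)

lemma abs_cfQ_mul_sub_cfP_le (k : ℕ) : |cfQ α k * α - cfP α k| ≤ 1 / cfQ α (k + 1) := by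
  have hx := (gaussMap_iterate_mem_Ioo_s15 hα hα01 (k + 1)).1
  have hq : (0 : ℝ) < cfQ α (k + 1) := by exact_mod_cast one_le_cfQ hα hα01 (k + 1)
  have hD : 0 < (cfQ α (k + 1) + cfQ α k * gaussMap^[k + 1] α : ℝ) :=
    add_pos_of_pos_of_nonneg hq (by positivity)
  have h := congrArg abs (cfQ_mul_sub_cfP_mul hα hα01 k)
  rw [abs_mul, abs_pow, abs_neg, abs_one, one_pow, abs_of_pos hD] at h
  rw [eq_one_div_of_mul_eq_one_left h]
  exact one_div_le_one_div_of_le hq (le_add_of_nonneg_right (by positivity))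

lemma mem_fractionNbhd_cfQ {k : ℕ} (hk : cfQ α k < cfA α (k + 1)) :
    α ∈ fractionNbhd (cfQ α k) := by
  set q := cfQ α k
  have hq : (0 : ℝ) < q := by exact_mod_cast one_le_cfQ hα hα01 k
  have hsq : (q : ℝ) ^ 2 ≤ cfQ α (k + 1) := by
    exact_mod_cast (sq q).trans_le <| (Nat.mul_le_mul_right q hk.le).trans (cfA_mul_cfQ_le α k)
  refine Set.mem_iUnion₂.2 ⟨cfP α k, mem_range.2 (Nat.lt_succ_of_le (cfP_le_cfQ hα hα01 k)), ?_⟩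
  rw [Metric.mem_closedBall, Real.dist_eq]
  calc |α - cfP α k / q| = |q * α - cfP α k| / q := by
        rw [← abs_of_pos hq, ← abs_div, abs_of_pos hq]; congr 1; field_simp
    _ ≤ 1 / cfQ α (k + 1) / q := by gcongr; exact abs_cfQ_mul_sub_cfP_le hα hα01 k
    _ ≤ 1 / (q : ℝ) ^ 3 := by
        rw [div_div]
        exact one_div_le_one_div_of_le (by positivity) (by nlinarith)

lemma eventually_cfA_succ_le_cfQ (hB : ∀ᶠ n in atTop, α ∉ fractionNbhd n) :
    ∀ᶠ k in atTop, cfA α (k + 1) ≤ cfQ α k :=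
  ((tendsto_cfQ_atTop hα hα01).eventually hB).mono fun _ hk =>
    not_lt.1 (mt (mem_fractionNbhd_cfQ hα hα01) hk)

lemma cfQ_succ_le_two_mul_sq {k : ℕ} (hk : cfA α (k + 1) ≤ cfQ α k) :
    cfQ α (k + 1) ≤ 2 * cfQ α k ^ 2 :=
  (cfQ_succ_le hα hα01 k).trans (by nlinarith [one_le_cfQ hα hα01 k])

lemma exists_pos_mul_log_le_S {K : ℕ} (hK : ∀ k ≥ K, cfA α (k + 1) ≤ cfQ α k) :
    ∃ c : ℝ, 0 < c ∧ ∀ᶠ M : ℕ in atTop, c * M * log M ≤ S α M := by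
  refine ⟨1 / 8, by norm_num, eventually_atTop.2 ⟨max 512 (cfQ α K), fun M hM => ?_⟩⟩
  obtain ⟨k, hkM, hMk⟩ := exists_le_lt_succ (f := cfQ α) (b := M) (by simp [cfQ]; omega)
    ((tendsto_cfQ_atTop hα hα01).eventually_gt_atTop M).exists
  have hKk : K ≤ k := by
    by_contra h
    have := cfQ_monotone hα hα01 (show k + 1 ≤ K by omega)
    omega
  set q := cfQ α k
  have hq : 0 < q := one_le_cfQ hα hα01 k
  have hMq : M < 2 * q ^ 2 := hMk.trans_le (cfQ_succ_le_two_mul_sq hα hα01 (hK k hKk))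
  have hM512 : (512 : ℝ) ≤ M := by exact_mod_cast (le_max_left _ _).trans hM
  have happrox : (M : ℝ) * |q * α - cfP α k| ≤ 1 := by
    have h := abs_cfQ_mul_sub_cfP_le hα hα01 k
    rw [le_div_iff₀ (by exact_mod_cast hq.trans_le (hkM.trans hMk.le))] at h
    calc (M : ℝ) * |q * α - cfP α k| ≤ cfQ α (k + 1) * |q * α - cfP α k| := by
          gcongr
      _ ≤ 1 := by linarith
  have hS := le_S_of_abs_mul_sub_le hα hq (cfP_coprime_cfQ α k) (Nat.div_mul_le_self M q) happrox
  have hhalf : (M : ℝ) / 2 ≤ (M / q : ℕ) * q := by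
    have h1 := Nat.lt_div_mul_add (a := M) hq
    have h2 := Nat.le_mul_of_pos_left q (Nat.div_pos hkM hq)
    have h3 : M ≤ 2 * (M / q * q) := by omega
    rw [div_le_iff₀ two_pos]
    exact_mod_cast h3.trans_eq (mul_comm _ _)
  have hlog := log_le_four_mul_log_sub_one hM512 (q := q) (by exact_mod_cast hMq.le)
  have hlogM := log_nonneg (show (1 : ℝ) ≤ M by linarith)
  have hlogq : log q ≤ log (q + 1) := log_le_log (by positivity) (by linarith)
  calc 1 / 8 * M * log M ≤ M / 2 * (log q - 1) := by nlinarith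
    _ ≤ (M / q : ℕ) * q * (log (q + 1) - 1) := by gcongr; linarith
    _ ≤ S α M := hS

end ContinuedFraction

theorem ae_lower_bound :
    ∀ᵐ α ∂(MeasureTheory.volume.restrict (Set.Ioo (0:ℝ) 1)),
      (∀ᶠ k : ℕ in Filter.atTop, cfA α (k+1) ≤ cfQ α k) ∧
      ∃ c : ℝ, 0 < c ∧ ∀ᶠ M : ℕ in Filter.atTop,
        c * M * Real.log M ≤ S α M := by
  filter_upwards [ae_restrict_mem measurableSet_Ioo, ae_restrict_of_ae ae_irrational,
    ae_restrict_of_ae ae_eventually_notMem_fractionNbhd] with α hα01 hα hB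
  have hA := eventually_cfA_succ_le_cfQ hα hα01 hB
  obtain ⟨K, hK⟩ := eventually_atTop.1 hA
  exact ⟨hA, exists_pos_mul_log_le_S hα hα01 hK⟩
end
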